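/- Let N and N_g be positive integers and let P be a symmetric real N×N matrix all of whose entries lie in {0, 1}, which is positive semidefinite, has rank N_g, and has all diagonal entries equal to 1. Then there exist positive integers N₁,…,N_{N_g} with N₁ + … + N_{N_g} = N such that the characteristic polynomial of P equals X^{N − N_g} · ∏_{j=1}^{N_g} (X − N_j); in particular, the nonzero eigenvalues of P, counted with multiplicity, are exactly the group sizes N₁,…,N_{N_g}. -/

import Mathlib

open Matrix Polynomial

/-! Positive semidefiniteness makes `P i j = 1` transitive, so with the unit diagonal and
symmetry it is an equivalence relation whose classes are the groups. Hence `P = B Bᵀ`, where `B`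
is the `N × N_g` membership matrix of the groups, and `Bᵀ B` is the diagonal matrix of the group
sizes. Since `B Bᵀ` and `Bᵀ B` have the same characteristic polynomial up to a power of `X`, and
`rank (B Bᵀ) = rank (Bᵀ B) = N_g`, the claim follows. -/

def fiberMatrix {ι κ : Type*} (R : Type*) [Zero R] [One R] [DecidableEq κ] (f : ι → κ) :
    Matrix ι κ R :=
  of fun i q => if f i = q then 1 else 0

section FiberMatrix

open Finset

variable {ι κ R : Type*} [DecidableEq κ] (f : ι → κ)

lemma fiberMatrix_mul_transpose [Fintype κ] [NonAssocSemiring R] :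
    fiberMatrix R f * (fiberMatrix R f)ᵀ = of fun i j => if f i = f j then 1 else 0 := by
  ext i j
  simp [fiberMatrix, mul_apply]

variable [Fintype ι]

lemma transpose_mul_fiberMatrix [NonAssocSemiring R] :
    (fiberMatrix R f)ᵀ * fiberMatrix R f = diagonal fun q => (#{i | f i = q} : R) := by
  ext q r
  simp only [fiberMatrix, mul_apply, transpose_apply, of_apply, ← ite_and, mul_boole, sum_boole,
    diagonal_apply]
  split_ifs with h
  · subst h; simp
  · rw [filter_false_of_mem fun i _ ⟨hr, hq⟩ => h (hq.symm.trans hr), card_empty, Nat.cast_zero]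

lemma card_fiber_pos (hf : Function.Surjective f) (q : κ) : 0 < #{i | f i = q} := by
  obtain ⟨i, rfl⟩ := hf q
  exact card_pos.mpr ⟨i, by simp⟩

variable [Fintype κ]

lemma sum_card_fiber : ∑ q, #{i | f i = q} = Fintype.card ι :=
  (card_eq_sum_card_fiberwise fun i _ => mem_univ (f i)).symm

lemma charpoly_fiberMatrix_mul_transpose [DecidableEq ι] [CommRing R]
    (hf : Function.Surjective f) :
    (fiberMatrix R f * (fiberMatrix R f)ᵀ).charpoly =
      X ^ (Fintype.card ι - Fintype.card κ) * ∏ q, (X - C (#{i | f i = q} : R)) := by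
  rw [charpoly_mul_comm_of_le _ _ (Fintype.card_le_of_surjective f hf),
    transpose_mul_fiberMatrix, charpoly_diagonal]

lemma rank_fiberMatrix_mul_transpose [Field R] [LinearOrder R] [IsStrictOrderedRing R]
    (hf : Function.Surjective f) :
    (fiberMatrix R f * (fiberMatrix R f)ᵀ).rank = Fintype.card κ := by
  classical
  rw [rank_self_mul_transpose, ← rank_transpose_mul_self, transpose_mul_fiberMatrix,
    rank_diagonal]
  exact Fintype.card_congr <| Equiv.subtypeUnivEquiv fun q => by
    exact_mod_cast (card_fiber_pos f hf q).ne'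

end FiberMatrix

namespace Matrix.PosSemidef

variable {n : Type*} [Fintype n] [DecidableEq n] {P : Matrix n n ℝ}

lemma one_le_two_mul_of_eq_one (hP : P.PosSemidef) (hdiag : ∀ i, P i i = 1) {i j k : n}
    (hij : P i j = 1) (hjk : P j k = 1) : 1 ≤ 2 * P i k := by
  have hsymm (a b : n) : P b a = P a b := hP.isHermitian.apply a b
  have hform (a b : n) : Pi.single a 1 ⬝ᵥ (P *ᵥ Pi.single b 1) = P a b := by
    simp only [mulVec_single, MulOpposite.op_one, one_smul, single_dotProduct, col_apply, one_mul]
  -- the quadratic form at `eᵢ - eⱼ + eₖ` equals `2 * P i k - 1`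
  have := hP.dotProduct_mulVec_nonneg (Pi.single i 1 - Pi.single j 1 + Pi.single k 1)
  simp only [star_trivial, mulVec_add, mulVec_sub, dotProduct_add, dotProduct_sub,
    add_dotProduct, sub_dotProduct, hform, hdiag, hsymm i j, hsymm i k, hsymm j k, hij,
    hjk] at this
  linarith

lemma equivalence_eq_one (hP : P.PosSemidef) (h01 : ∀ i j, P i j = 0 ∨ P i j = 1)
    (hdiag : ∀ i, P i i = 1) : Equivalence fun i j => P i j = 1 where
  refl := hdiag
  symm {i j} h := (hP.isHermitian.apply i j).trans h
  trans {i j k} hij hjk := (h01 i k).resolve_left fun h => by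
    linarith [hP.one_le_two_mul_of_eq_one hdiag hij hjk]

end Matrix.PosSemidef

theorem stmt11_general (N Ng : ℕ)
    (P : Matrix (Fin N) (Fin N) ℝ)
    (h01 : ∀ i j, P i j = 0 ∨ P i j = 1)
    (hpsd : P.PosSemidef)
    (hrank : P.rank = Ng)
    (hdiag : ∀ i, P i i = 1) :
    ∃ c : Fin Ng → ℕ,
      (∀ j, 0 < c j) ∧ (∑ j, c j = N) ∧
      P.charpoly = X ^ (N - Ng) * ∏ j, (X - C ((c j : ℝ))) := by
  classical
  let s : Setoid (Fin N) := ⟨_, hpsd.equivalence_eq_one h01 hdiag⟩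
  let f : Fin N → Quotient s := Quotient.mk s
  have hf : Function.Surjective f := Quotient.mk_surjective
  have hP : P = fiberMatrix ℝ f * (fiberMatrix ℝ f)ᵀ := by
    ext i j
    have hfij : f i = f j ↔ P i j = 1 := Quotient.eq
    rw [fiberMatrix_mul_transpose, of_apply]
    rcases h01 i j with h | h <;> simp [hfij, h]
  have hcard : Fintype.card (Quotient s) = Ng := by
    rw [← hrank, hP, rank_fiberMatrix_mul_transpose f hf]
  let e : Fin Ng ≃ Quotient s := (Fintype.equivFinOfCardEq hcard).symm
  refine ⟨fun j => (Finset.univ.filter fun i => f i = e j).card, fun j => card_fiber_pos f hf (e j),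
    ?_, ?_⟩
  · rw [e.sum_comp fun q => (Finset.univ.filter fun i => f i = q).card, sum_card_fiber,
      Fintype.card_fin]
  · rw [hP, charpoly_fiberMatrix_mul_transpose f hf, Fintype.card_fin, hcard,
      ← e.prod_comp]

/-- **Proposition 4, eigenvalues.**
For a symmetric `{0,1}`-valued positive semidefinite `N × N` matrix `P` of rank
`N_g` with unit diagonal, there are positive integers `N₁, …, N_{N_g}` summing to
`N` such that the characteristic polynomial of `P` is
`X^{N − N_g} · ∏ⱼ (X − Nⱼ)`: the nonzero eigenvalues of `P`, with multiplicity,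
are exactly the group sizes. -/
theorem stmt11 (N Ng : ℕ) (hN : 0 < N) (hNg : 0 < Ng)
    (P : Matrix (Fin N) (Fin N) ℝ) (hsymm : P.IsSymm)
    (h01 : ∀ i j, P i j = 0 ∨ P i j = 1)
    (hpsd : P.PosSemidef)
    (hrank : P.rank = Ng)
    (hdiag : ∀ i, P i i = 1) :
    ∃ c : Fin Ng → ℕ,
      (∀ j, 0 < c j) ∧ (∑ j, c j = N) ∧
      P.charpoly = X ^ (N - Ng) * ∏ j, (X - C ((c j : ℝ))) :=
  stmt11_general N Ng P h01 hpsd hrank hdiag
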